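/- A priori l^p bound for solutions of the discrete nonlinear Schrödinger equation: Let d ≥ 1, h > 0, σ > 0, λ ∈ {1,−1}, 1 ≤ p ≤ ∞, and let V = {V_n} ∈ l^∞_h be a bounded real-valued potential. Let u : [0,T) → l^p_h be a continuously differentiable solution of i u_n'(t) − (Δ_h u(t))_n + V_n u_n(t) + λ|u_n(t)|^{2σ} u_n(t) = 0 with u(0) = u_0 ∈ l^p_h. Then for all t ∈ [0,T), ‖u(t)‖_{l^p_h} ≤ e^{2d h^{-2} t} ‖u_0‖_{l^p_h}. -/

import Mathlib

/-!
Split `-Δ_h` into its off-diagonal part, `-h⁻²` times the sum `hopping u` of the `2d` lattice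
shifts, and its diagonal part `2d h⁻²`, so that the equation reads
`u' = -i h⁻² hopping u + i b u` with the real phase `b_n = V_n + λ |u_n|^{2σ} + 2d h⁻²`.
At a time `t₀` compare `u` with the curve `w s = e^{i b (s - t₀)} u(t₀)`: it keeps the norm
`‖u(t₀)‖` because `b` is real, and it is differentiable in `l^p` because `b` is bounded. Hence the
right Dini derivative of `‖u‖` at `t₀` is at most `‖(u - w)'(t₀)‖ = h⁻² ‖hopping u(t₀)‖`, which is
at most `2d h⁻² ‖u(t₀)‖` since shifts are `l^p` isometries. Gronwall's inequality concludes.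
-/

noncomputable section

open scoped ENNReal

/-- The integer lattice indexing `hℤ^d` (the point `n ∈ hℤ^d` corresponds to `h • n`). -/
abbrev ZLat (d : ℕ) := Fin d → ℤ

/-- The `j`-th standard basis vector of the lattice. -/
def latE {d : ℕ} (j : Fin d) : ZLat d := Pi.single j 1

/-- The discrete Laplacian `Δ_h` on `ℂ`-valued sequences on `hℤ^d`, acting pointwise:
`(Δ_h u)_n = h⁻² Σ_j (u_{n+he_j} + u_{n−he_j} − 2u_n)`. -/
def discLapC (d : ℕ) (h : ℝ) (u : ZLat d → ℂ) : ZLat d → ℂ :=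
  fun n => (∑ j : Fin d, (u (n + latE j) + u (n - latE j) - 2 * u n)) / (h : ℂ) ^ 2

/-- `u : ℝ → l^p_h` is a continuously differentiable solution (with derivative `u'`) of the
discrete nonlinear Schrödinger equation
`i u_n'(t) − (Δ_h u(t))_n + V_n u_n(t) + λ |u_n(t)|^{2σ} u_n(t) = 0` on the set `S ⊆ ℝ`. -/
def IsDNLSSolutionOn (d : ℕ) (h σ lam : ℝ) (V : ZLat d → ℝ) (p : ℝ≥0∞) [Fact (1 ≤ p)]
    (S : Set ℝ) (u u' : ℝ → lp (fun _ : ZLat d => ℂ) p) : Prop :=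
  (∀ t ∈ S, HasDerivWithinAt u (u' t) S t) ∧ ContinuousOn u' S ∧
    ∀ t ∈ S, ∀ n : ZLat d,
      Complex.I * (u' t : ZLat d → ℂ) n - discLapC d h (⇑(u t)) n
          + (V n : ℂ) * (u t : ZLat d → ℂ) n
          + (lam : ℂ) * ((‖(u t : ZLat d → ℂ) n‖ ^ (2 * σ) : ℝ) : ℂ)
            * (u t : ZLat d → ℂ) n = 0

open Set Filter Topology Asymptotics

namespace lp

variable {α β E : Type*} [NormedAddCommGroup E] {p : ℝ≥0∞}

theorem _root_.Memℓp.comp_equiv {f : α → E} (hf : Memℓp f p) (e : β ≃ α) :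
    Memℓp (f ∘ e) p := by
  obtain rfl | rfl | hp := p.trichotomy
  · rw [memℓp_zero_iff] at hf ⊢
    exact hf.preimage e.injective.injOn
  · rw [memℓp_infty_iff] at hf ⊢
    exact hf.mono (range_comp_subset_range e fun i => ‖f i‖)
  · rw [memℓp_gen_iff hp] at hf ⊢
    exact e.summable_iff.2 hf

def compEquiv (e : β ≃ α) (f : ℓ^p(α, E)) : ℓ^p(β, E) :=
  ⟨f ∘ e, (lp.memℓp f).comp_equiv e⟩

@[simp]
theorem compEquiv_apply (e : β ≃ α) (f : ℓ^p(α, E)) (i : β) : compEquiv e f i = f (e i) :=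
  rfl

theorem norm_compEquiv (hp : p ≠ 0) (e : β ≃ α) (f : ℓ^p(α, E)) : ‖compEquiv e f‖ = ‖f‖ := by
  obtain rfl | rfl | hp' := p.trichotomy
  · exact absurd rfl hp
  · exact e.iSup_comp (g := fun i => ‖f i‖)
  · rw [norm_eq_tsum_rpow hp', norm_eq_tsum_rpow hp']
    exact congrArg (· ^ (1 / p.toReal)) (e.tsum_eq fun i => ‖f i‖ ^ p.toReal)

def mulInfty (b : ℓ^∞(α, ℝ)) (f : ℓ^p(α, ℂ)) : ℓ^p(α, ℂ) :=
  ⟨fun i => (b i : ℂ) * f i, ((lp.memℓp f).const_mul (‖b‖ : ℂ)).mono' fun i => by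
    simp only [norm_mul, Complex.norm_real, Real.norm_of_nonneg (norm_nonneg b)]
    gcongr
    exact norm_apply_le_norm ENNReal.top_ne_zero b i⟩

@[simp]
theorem mulInfty_apply (b : ℓ^∞(α, ℝ)) (f : ℓ^p(α, ℂ)) (i : α) :
    mulInfty b f i = b i * f i :=
  rfl

def phaseRotate (b : α → ℝ) (s : ℝ) (f : ℓ^p(α, ℂ)) : ℓ^p(α, ℂ) :=
  ⟨fun i => Complex.exp ((b i * s : ℝ) * Complex.I) * f i, (lp.memℓp f).mono' fun i => by
    rw [norm_mul, Complex.norm_exp_ofReal_mul_I, one_mul]⟩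

@[simp]
theorem phaseRotate_apply (b : α → ℝ) (s : ℝ) (f : ℓ^p(α, ℂ)) (i : α) :
    phaseRotate b s f i = Complex.exp ((b i * s : ℝ) * Complex.I) * f i :=
  rfl

@[simp]
theorem phaseRotate_zero (b : α → ℝ) (f : ℓ^p(α, ℂ)) : phaseRotate b 0 f = f :=
  lp.ext <| funext fun i => by simp

theorem norm_phaseRotate (hp : p ≠ 0) (b : α → ℝ) (s : ℝ) (f : ℓ^p(α, ℂ)) :
    ‖phaseRotate b s f‖ = ‖f‖ := by
  have h (i : α) : ‖phaseRotate b s f i‖ = ‖f i‖ := by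
    rw [phaseRotate_apply, norm_mul, Complex.norm_exp_ofReal_mul_I, one_mul]
  exact le_antisymm (norm_mono hp fun i => (h i).le) (norm_mono hp fun i => (h i).ge)

theorem norm_phaseRotate_sub_sub_le (hp : p ≠ 0) (b : ℓ^∞(α, ℝ)) (f : ℓ^p(α, ℂ)) {s : ℝ}
    (hs : |s| * ‖b‖ ≤ 1) :
    ‖phaseRotate b s f - f - s • Complex.I • mulInfty b f‖ ≤ (s * ‖b‖) ^ 2 * ‖f‖ := by
  have hpointwise (i : α) : ‖(phaseRotate b s f - f - s • Complex.I • mulInfty b f) i‖ ≤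
      ‖((((s * ‖b‖) ^ 2 : ℝ) : ℂ) • f) i‖ := by
    have hbi : |b i| ≤ ‖b‖ := norm_apply_le_norm ENNReal.top_ne_zero b i
    have hx : ‖((b i * s : ℝ) : ℂ) * Complex.I‖ ≤ 1 := by
      rw [norm_mul, Complex.norm_I, mul_one, Complex.norm_real, Real.norm_eq_abs, abs_mul]
      nlinarith [abs_nonneg s, abs_nonneg (b i)]
    have hrem := Complex.norm_exp_sub_one_sub_id_le hx
    simp only [coeFn_sub, coeFn_smul, Pi.sub_apply, Pi.smul_apply, phaseRotate_apply,
      mulInfty_apply, smul_eq_mul, Complex.real_smul]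
    set x : ℂ := ((b i * s : ℝ) : ℂ) * Complex.I
    have hsplit : Complex.exp x * f i - f i - s * (Complex.I * (b i * f i)) =
        (Complex.exp x - 1 - x) * f i := by
      simp only [x]; push_cast; ring
    rw [hsplit, norm_mul, norm_mul, Complex.norm_real, Real.norm_of_nonneg (sq_nonneg _)]
    gcongr
    refine hrem.trans ?_
    rw [norm_mul, Complex.norm_I, mul_one, Complex.norm_real, Real.norm_eq_abs, abs_mul]
    calc (|b i| * |s|) ^ 2 ≤ (‖b‖ * |s|) ^ 2 := by gcongr
      _ = (s * ‖b‖) ^ 2 := by rw [mul_pow, sq_abs]; ring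
  calc ‖phaseRotate b s f - f - s • Complex.I • mulInfty b f‖
      ≤ ‖(((s * ‖b‖) ^ 2 : ℝ) : ℂ) • f‖ := norm_mono hp hpointwise
    _ = (s * ‖b‖) ^ 2 * ‖f‖ := by
      rw [norm_const_smul hp, Complex.norm_real, Real.norm_of_nonneg (sq_nonneg _)]

theorem hasDerivAt_phaseRotate [Fact (1 ≤ p)] (b : ℓ^∞(α, ℝ)) (f : ℓ^p(α, ℂ)) :
    HasDerivAt (fun s => phaseRotate b s f) (Complex.I • mulInfty b f) 0 := by
  have hp : p ≠ 0 := (zero_lt_one.trans_le Fact.out).ne'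
  rw [hasDerivAt_iff_isLittleO]
  have hsmall : ∀ᶠ s in 𝓝 (0 : ℝ), |s| * ‖b‖ ≤ 1 := by
    have : Tendsto (fun s : ℝ => |s| * ‖b‖) (𝓝 0) (𝓝 0) :=
      (continuous_abs.mul continuous_const).tendsto' 0 0 (by simp)
    exact this.eventually (ge_mem_nhds one_pos)
  have hbigO : (fun s => phaseRotate b s f - f - s • Complex.I • mulInfty b f) =O[𝓝 0]
      fun s : ℝ => s ^ 2 :=
    IsBigO.of_bound (‖b‖ ^ 2 * ‖f‖) <| hsmall.mono fun s hs => by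
      rw [Real.norm_eq_abs, abs_pow, sq_abs]
      calc _ ≤ (s * ‖b‖) ^ 2 * ‖f‖ := norm_phaseRotate_sub_sub_le hp b f hs
        _ = _ := by ring
  simpa using hbigO.trans_isLittleO (isLittleO_pow_id one_lt_two)

end lp

theorem frequently_slope_norm_lt_of_hasDerivWithinAt_sub {E : Type*} [NormedAddCommGroup E]
    [NormedSpace ℝ E] {u w : ℝ → E} {g : E} {t₀ r : ℝ}
    (hw : ∀ s, ‖w s‖ = ‖u t₀‖) (hw₀ : w t₀ = u t₀)
    (hg : HasDerivWithinAt (fun s => u s - w s) g (Ici t₀) t₀) (hr : ‖g‖ < r) :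
    ∃ᶠ z in 𝓝[>] t₀, (z - t₀)⁻¹ * (‖u z‖ - ‖u t₀‖) < r := by
  refine ((hg.liminf_right_slope_norm_le hr).and_eventually self_mem_nhdsWithin).mono ?_
  rintro z ⟨hz, hzt : t₀ < z⟩
  have hnorm : ‖u z‖ - ‖u t₀‖ ≤ ‖u z - w z‖ - ‖u t₀ - w t₀‖ := by
    rw [hw₀, sub_self, norm_zero, sub_zero, ← hw z]
    exact norm_sub_norm_le _ _
  exact (mul_le_mul_of_nonneg_left hnorm (inv_nonneg.2 (sub_nonneg.2 hzt.le))).trans_lt hz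

open scoped lp

section DNLS

variable {d : ℕ} {p : ℝ≥0∞}

def hopping (U : ℓ^p(ZLat d, ℂ)) : ℓ^p(ZLat d, ℂ) :=
  ∑ j, (lp.compEquiv (Equiv.addRight (latE j)) U + lp.compEquiv (Equiv.subRight (latE j)) U)

theorem hopping_apply (U : ℓ^p(ZLat d, ℂ)) (n : ZLat d) :
    hopping U n = ∑ j, (U (n + latE j) + U (n - latE j)) := by
  rw [hopping, lp.coeFn_sum, Finset.sum_apply]
  rfl

theorem discLapC_eq_hopping (h : ℝ) (U : ℓ^p(ZLat d, ℂ)) (n : ZLat d) :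
    discLapC d h U n = (hopping U n - 2 * d * U n) / (h : ℂ) ^ 2 := by
  simp only [discLapC, hopping_apply, Finset.sum_sub_distrib, Finset.sum_const, Finset.card_univ,
    Fintype.card_fin, nsmul_eq_mul]
  ring

theorem norm_hopping_le [Fact (1 ≤ p)] (U : ℓ^p(ZLat d, ℂ)) : ‖hopping U‖ ≤ 2 * d * ‖U‖ := by
  have hp : p ≠ 0 := (zero_lt_one.trans_le Fact.out).ne'
  calc ‖hopping U‖
      ≤ ∑ j : Fin d, ‖lp.compEquiv (Equiv.addRight (latE j)) U
          + lp.compEquiv (Equiv.subRight (latE j)) U‖ := norm_sum_le _ _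
    _ ≤ ∑ _j : Fin d, 2 * ‖U‖ := Finset.sum_le_sum fun j _ => (norm_add_le _ _).trans <| by
        rw [lp.norm_compEquiv hp, lp.norm_compEquiv hp, two_mul]
    _ = 2 * d * ‖U‖ := by
        rw [Finset.sum_const, Finset.card_univ, Fintype.card_fin, nsmul_eq_mul, mul_left_comm,
          mul_assoc]

def dnlsPhase (d : ℕ) (h σ lam : ℝ) (V : ZLat d → ℝ) (U : ZLat d → ℂ) : ZLat d → ℝ :=
  fun n => V n + lam * ‖U n‖ ^ (2 * σ) + 2 * d / h ^ 2

theorem memℓp_dnlsPhase [Fact (1 ≤ p)] {h σ lam CV : ℝ} {V : ZLat d → ℝ}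
    (hV : ∀ n, |V n| ≤ CV) (hσ : 0 ≤ σ) (U : ℓ^p(ZLat d, ℂ)) :
    Memℓp (dnlsPhase d h σ lam V U) ∞ := by
  have hp : p ≠ 0 := (zero_lt_one.trans_le Fact.out).ne'
  refine memℓp_infty ⟨CV + |lam| * ‖U‖ ^ (2 * σ) + |2 * d / h ^ 2|, ?_⟩
  rintro _ ⟨n, rfl⟩
  have hUn : ‖U n‖ ^ (2 * σ) ≤ ‖U‖ ^ (2 * σ) :=
    Real.rpow_le_rpow (norm_nonneg _) (lp.norm_apply_le_norm hp U n) (by positivity)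
  calc ‖dnlsPhase d h σ lam V U n‖
      ≤ |V n| + |lam * ‖U n‖ ^ (2 * σ)| + |2 * d / h ^ 2| := abs_add_three _ _ _
    _ ≤ CV + |lam| * ‖U‖ ^ (2 * σ) + |2 * d / h ^ 2| := by
        rw [abs_mul, abs_of_nonneg (by positivity : 0 ≤ ‖U n‖ ^ (2 * σ))]
        gcongr
        exact hV n

variable [Fact (1 ≤ p)] {h σ lam : ℝ} {V : ZLat d → ℝ} {S : Set ℝ} {u u' : ℝ → ℓ^p(ZLat d, ℂ)}

theorem IsDNLSSolutionOn.deriv_apply (hsol : IsDNLSSolutionOn d h σ lam V p S u u') {t : ℝ}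
    (ht : t ∈ S) (n : ZLat d) :
    u' t n = -Complex.I / (h : ℂ) ^ 2 * hopping (u t) n
      + Complex.I * dnlsPhase d h σ lam V (u t) n * u t n := by
  have hE := hsol.2.2 t ht n
  rw [discLapC_eq_hopping] at hE
  simp only [dnlsPhase]
  push_cast
  linear_combination (-Complex.I) * hE + u' t n * Complex.I_sq

theorem IsDNLSSolutionOn.frequently_slope_norm_lt {T CV : ℝ}
    (hsol : IsDNLSSolutionOn d h σ lam V p (Ico 0 T) u u') (hV : ∀ n, |V n| ≤ CV) (hσ : 0 ≤ σ)
    {t₀ r : ℝ} (ht₀ : t₀ ∈ Ico 0 T) (hr : 2 * d / h ^ 2 * ‖u t₀‖ < r) :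
    ∃ᶠ z in 𝓝[>] t₀, (z - t₀)⁻¹ * (‖u z‖ - ‖u t₀‖) < r := by
  have hp : p ≠ 0 := (zero_lt_one.trans_le Fact.out).ne'
  set U := u t₀
  let b : ℓ^∞(ZLat d, ℝ) := ⟨dnlsPhase d h σ lam V U, memℓp_dnlsPhase hV hσ U⟩
  have hu : HasDerivWithinAt u (u' t₀) (Ici t₀) t₀ :=
    (hsol.1 t₀ ht₀).mono_of_mem_nhdsWithin (Ico_mem_nhdsGE_of_mem ht₀)
  have hw : HasDerivAt (fun s => lp.phaseRotate b (s - t₀) U) (Complex.I • lp.mulInfty b U) t₀ :=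
    HasDerivAt.comp_sub_const t₀ t₀ (by rw [sub_self]; exact lp.hasDerivAt_phaseRotate b U)
  have hg : u' t₀ - Complex.I • lp.mulInfty b U = (-Complex.I / (h : ℂ) ^ 2) • hopping U :=
    lp.ext <| funext fun n => by
      rw [lp.coeFn_sub, lp.coeFn_smul, lp.coeFn_smul, Pi.sub_apply, Pi.smul_apply, Pi.smul_apply,
        lp.mulInfty_apply, hsol.deriv_apply ht₀ n, smul_eq_mul, smul_eq_mul]
      ring
  refine frequently_slope_norm_lt_of_hasDerivWithinAt_sub
    (fun s => lp.norm_phaseRotate hp _ _ _) (by simp) (hu.sub hw.hasDerivWithinAt) ?_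
  rw [hg, norm_smul, norm_div, norm_neg, Complex.norm_I, norm_pow, Complex.norm_real,
    Real.norm_eq_abs, sq_abs]
  calc 1 / h ^ 2 * ‖hopping U‖ ≤ 1 / h ^ 2 * (2 * d * ‖U‖) := by gcongr; exact norm_hopping_le U
    _ = 2 * d / h ^ 2 * ‖U‖ := by ring
    _ < r := hr

end DNLS

theorem dnls_apriori_lp_bound_general
    (d : ℕ) (h : ℝ) (σ : ℝ) (hσ : 0 < σ)
    (lam : ℝ) (p : ℝ≥0∞) [Fact (1 ≤ p)]
    (V : ZLat d → ℝ) (CV : ℝ) (hV : ∀ n, |V n| ≤ CV)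
    (T : ℝ) (u u' : ℝ → lp (fun _ : ZLat d => ℂ) p)
    (hsol : IsDNLSSolutionOn d h σ lam V p (Set.Ico 0 T) u u')
    (u₀ : lp (fun _ : ZLat d => ℂ) p) (hu0 : u 0 = u₀) :
    ∀ t ∈ Set.Ico (0 : ℝ) T, ‖u t‖ ≤ Real.exp (2 * d * t / h ^ 2) * ‖u₀‖ := by
  intro t ht
  have hsub : Icc 0 t ⊆ Ico 0 T := Icc_subset_Ico_right ht.2
  have hcont : ContinuousOn u (Ico 0 T) := fun s hs => (hsol.1 s hs).continuousWithinAt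
  have hbound := le_gronwallBound_of_liminf_deriv_right_le
    (f' := fun s => 2 * d / h ^ 2 * ‖u s‖) (ε := 0) (hcont.norm.mono hsub)
    (fun s hs _ hr => hsol.frequently_slope_norm_lt hV hσ.le (hsub (Ico_subset_Icc_self hs)) hr)
    (congrArg norm hu0).le (fun _ _ => (add_zero _).ge) t ⟨ht.1, le_rfl⟩
  rw [sub_zero, gronwallBound_ε0, mul_comm] at hbound
  calc ‖u t‖ ≤ Real.exp (2 * d / h ^ 2 * t) * ‖u₀‖ := hbound
    _ = Real.exp (2 * d * t / h ^ 2) * ‖u₀‖ := by ring_nf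

/-- **A priori `l^p` bound for solutions of the discrete NLS.**
Any continuously differentiable solution of the discrete nonlinear Schrödinger equation on
`[0,T)` with bounded potential satisfies `‖u(t)‖_{l^p_h} ≤ e^{2d h⁻² t} ‖u(0)‖_{l^p_h}`. -/
theorem dnls_apriori_lp_bound
    (d : ℕ) (hd : 1 ≤ d) (h : ℝ) (hh : 0 < h) (σ : ℝ) (hσ : 0 < σ)
    (lam : ℝ) (hlam : lam = 1 ∨ lam = -1) (p : ℝ≥0∞) [Fact (1 ≤ p)]
    (V : ZLat d → ℝ) (CV : ℝ) (hV : ∀ n, |V n| ≤ CV)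
    (T : ℝ) (hT : 0 < T) (u u' : ℝ → lp (fun _ : ZLat d => ℂ) p)
    (hsol : IsDNLSSolutionOn d h σ lam V p (Set.Ico 0 T) u u')
    (u₀ : lp (fun _ : ZLat d => ℂ) p) (hu0 : u 0 = u₀) :
    ∀ t ∈ Set.Ico (0 : ℝ) T, ‖u t‖ ≤ Real.exp (2 * d * t / h ^ 2) * ‖u₀‖ :=
  dnls_apriori_lp_bound_general d h σ hσ lam p V CV hV T u u' hsol u₀ hu0
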